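/- arXiv:2602.15314 — 3 statements merged into one kernel-verified Lean document; each statement's English description precedes it below -/
import Mathlib

section
/- Suppose 2n integers c_1 > c_2 > ... > c_n ≥ 0 satisfy: every pairwise difference c_i - c_j (i < j) and every c_i itself lies in the set F = {b_u - b_w : (u,w) ∈ E}, where the b's form a Sidon set (all sums b_i + b_j pairwise distinct, and all triple sums b_i + b_j + b_k pairwise distinct). If c_i = b_{s(i)} - b_{t(i)} for mappings s, t, then for any i < j, either s(i) = s(j) or t(i) = t(j). -/
/-- If `b` has pairwise distinct sums and pairwise distinct triple sums (as multisets),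
`c` is strictly decreasing and positive with `c i = b (s i) - b (t i)`, `s i ≠ t i`,
and every difference `c i - c j` (for `i < j`) is of the form `b y - b z` with `y ≠ z`,
then for any `i < j` either `s i = s j` or `t i = t j`. -/
theorem clique_mapping_constant {v n : ℕ} (b : Fin v → ℤ)
    (hb2 : ∀ i j i' j' : Fin v, b i + b j = b i' + b j' →
      ({i, j} : Multiset (Fin v)) = {i', j'})
    (hb3 : ∀ i j k i' j' k' : Fin v, b i + b j + b k = b i' + b j' + b k' →
      ({i, j, k} : Multiset (Fin v)) = {i', j', k'})
    (c : Fin n → ℤ) (hanti : StrictAnti c) (hpos : ∀ i, 0 < c i)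
    (s t : Fin n → Fin v) (hst : ∀ i, c i = b (s i) - b (t i))
    (hne : ∀ i, s i ≠ t i)
    (hdiff : ∀ i j : Fin n, i < j → ∃ y z : Fin v, y ≠ z ∧ c i - c j = b y - b z) :
    ∀ i j : Fin n, i < j → s i = s j ∨ t i = t j := by
  intro i j hij
  obtain ⟨y, z, hyz, hcd⟩ := hdiff i j hij
  have key : b (s i) + b (t j) + b z = b (t i) + b (s j) + b y := by
    have h1 := hst i
    have h2 := hst j
    linarith
  have hm := hb3 _ _ _ _ _ _ key
  -- membership of s i
  have hsi : s i = t i ∨ s i = s j ∨ s i = y := by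
    have : s i ∈ ({t i, s j, y} : Multiset (Fin v)) := by
      rw [← hm]; simp
    simpa using this
  rcases hsi with h | h | h
  · exact absurd h (hne i)
  · exact Or.inl h
  · -- s i = y
    have htj : t j = t i ∨ t j = s j ∨ t j = y := by
      have : t j ∈ ({t i, s j, y} : Multiset (Fin v)) := by
        rw [← hm]; simp
      simpa using this
    rcases htj with h2 | h2 | h2
    · exact Or.inr h2.symm
    · exact absurd h2.symm (hne j)
    · -- t j = y = s i as well; count argument
      have hcount := congrArg (Multiset.count y) hm
      simp [Multiset.count_cons, h, h2, hyz.symm] at hcount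
      split_ifs at hcount with ha hb hb
      · exact Or.inl (h.trans ha)
      · exact Or.inl (h.trans ha)
      · exact absurd (h.trans hb) (hne i)
      · omega
end

section
/- If a graph G = (V, E) has a clique {v_1,...,v_n} and b : V → ℤ is a Sidon-type map (all pairwise sums distinct), then setting a_i = b(v_n) - b(v_i), the translated sets a_i + X are pairwise disjoint, where X is constructed so that the difference set (X - X) ∩ [1..ρ] equals [1..ρ] \ {b(u) - b(w) : (u,w) ∈ E}. -/
/-- If a graph `G` on vertices `Fin m` has a clique `v 0 < v 1 < ... < v n`,
`b` is a strictly increasing Sidon map into `[0..ρ-1]`, and `X` is a set of integers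
whose positive differences `≤ ρ` are exactly the non-edge differences' complement
(i.e. `d ∈ [1..ρ]` is a difference of `X` iff `d` is not of the form `b u - b w`
with `(u,w)` an edge), then the shifts `a i = b (v last) - b (v i)` lie in `[0..ρ)`
and the translates `a i + X` are pairwise disjoint. -/
theorem clique_gives_disjoint_shifts {m n : ℕ} (ρ : ℤ) (hρ : 1 ≤ ρ)
    (G : SimpleGraph (Fin m)) (b : Fin m → ℤ) (hbmono : StrictMono b)
    (hbrange : ∀ u, 0 ≤ b u ∧ b u < ρ)
    (hsidon : ∀ i j k l : Fin m, b i + b j = b k + b l →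
      (i = k ∧ j = l) ∨ (i = l ∧ j = k))
    (X : Set ℤ)
    (hX : ∀ d : ℤ, 1 ≤ d → d ≤ ρ →
      ((∃ x ∈ X, ∃ y ∈ X, x - y = d) ↔ ¬ ∃ u w : Fin m, G.Adj u w ∧ b u - b w = d))
    (v : Fin (n + 1) → Fin m) (hvmono : StrictMono v)
    (hclique : ∀ i j : Fin (n + 1), i ≠ j → G.Adj (v i) (v j)) :
    (∀ i : Fin (n + 1), 0 ≤ b (v (Fin.last n)) - b (v i) ∧
        b (v (Fin.last n)) - b (v i) < ρ) ∧
      ∀ i j : Fin (n + 1), i ≠ j →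
        ((fun x => (b (v (Fin.last n)) - b (v i)) + x) '' X) ∩
          ((fun x => (b (v (Fin.last n)) - b (v j)) + x) '' X) = ∅ := by
  have key : ∀ i j : Fin (n + 1), i < j →
      ((fun x => (b (v (Fin.last n)) - b (v i)) + x) '' X) ∩
        ((fun x => (b (v (Fin.last n)) - b (v j)) + x) '' X) = ∅ := by
    intro i j hij
    ext z
    simp only [Set.mem_inter_iff, Set.mem_image, Set.mem_empty_iff_false, iff_false]
    rintro ⟨⟨x, hx, hxz⟩, ⟨y, hy, hyz⟩⟩
    have hbij : b (v i) < b (v j) := hbmono (hvmono hij)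
    set d := b (v j) - b (v i) with hd
    have hd1 : 1 ≤ d := by omega
    have hdρ : d ≤ ρ := by
      have h1 := (hbrange (v i)).1
      have h2 := (hbrange (v j)).2
      omega
    have hdiff : y - x = d := by omega
    exact (hX d hd1 hdρ).mp ⟨y, hy, x, hx, hdiff⟩
      ⟨v j, v i, hclique j i hij.ne', rfl⟩
  refine ⟨?_, ?_⟩
  · intro i
    have h1 : b (v i) ≤ b (v (Fin.last n)) :=
      hbmono.monotone (hvmono.monotone (Fin.le_last i))
    have h2 := (hbrange (v i)).1
    have h3 := (hbrange (v (Fin.last n))).2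
    constructor <;> omega
  · intro i j hij
    rcases lt_or_gt_of_ne hij with h | h
    · exact key i j h
    · rw [Set.inter_comm]; exact key j i h
end

section
/- Mismatch counting lemma: let C be a string of length 2m with u numerals (non-⋆ positions) and T a tile with v numerals, |T| ≤ m. If T has no match at any of the 2m starting positions inside a window such that each starting offset produces at least one collision between a numeral of C and a numeral of T, then u · v ≥ 2m; in particular max(u, v) ≥ √m. -/
open Finset

/-- A pair `(p, q)` determines the offset `d` with `p = d + q`, so distinct offsets need distinct
colliding pairs. -/
theorem card_le_card_mul_card_of_forall_exists_eq_add {α : Type*} [Add α] [IsRightCancelAdd α]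
    {D A B : Finset α} (h : ∀ d ∈ D, ∃ p ∈ A, ∃ q ∈ B, p = d + q) : #D ≤ #A * #B := by
  rw [← card_product]
  refine card_le_card_of_forall_subsingleton (fun d pq => pq.1 = d + pq.2) ?_ ?_
  · intro d hd
    obtain ⟨p, hp, q, hq, rfl⟩ := h d hd
    exact ⟨(d + q, q), mk_mem_product hp hq, rfl⟩
  · rintro ⟨p, q⟩ - d ⟨-, hd⟩ d' ⟨-, hd'⟩
    exact add_right_cancel (hd.symm.trans hd')

theorem Nat.sqrt_le_or_sqrt_le_of_le_mul {m a b : ℕ} (h : m ≤ a * b) :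
    Nat.sqrt m ≤ a ∨ Nat.sqrt m ≤ b := by
  by_contra! hab
  have := Nat.mul_lt_mul'' hab.1 hab.2
  have := Nat.sqrt_le m
  omega

theorem mismatch_counting_general (m : ℕ) (PC PT : Finset ℕ)
    (hcoll : ∀ d : ℕ, d < 2 * m → ∃ p ∈ PC, ∃ q ∈ PT, p = d + q) :
    2 * m ≤ PC.card * PT.card ∧ (Nat.sqrt m ≤ PC.card ∨ Nat.sqrt m ≤ PT.card) := by
  have hcard : 2 * m ≤ #PC * #PT := by
    simpa using card_le_card_mul_card_of_forall_exists_eq_add (D := range (2 * m))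
      fun d hd => hcoll d (mem_range.1 hd)
  exact ⟨hcard, Nat.sqrt_le_or_sqrt_le_of_le_mul (by omega)⟩

/-- Mismatch counting: let `PC` be the numeral positions of a string `C` of length `2m`
and `PT` the numeral positions of a tile of length at most `m`. If every starting
offset `d < 2m` produces a collision (a pair `p ∈ PC`, `q ∈ PT` with `p = d + q`),
then `|PC| · |PT| ≥ 2m`; in particular `max(|PC|, |PT|) ≥ √m`. -/
theorem mismatch_counting (m : ℕ) (PC PT : Finset ℕ)
    (hPC : PC ⊆ Finset.range (2 * m)) (hPT : PT ⊆ Finset.range m)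
    (hcoll : ∀ d : ℕ, d < 2 * m → ∃ p ∈ PC, ∃ q ∈ PT, p = d + q) :
    2 * m ≤ PC.card * PT.card ∧ (Nat.sqrt m ≤ PC.card ∨ Nat.sqrt m ≤ PT.card) :=
  mismatch_counting_general m PC PT hcoll
end
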